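/- arXiv:1504.00302 — 2 statements merged into one kernel-verified Lean document; each statement's English description precedes it below -/
import Mathlib

section
/- Let d, n ∈ ℕ, let s_1, …, s_n ∈ ℝ^d, let a, b ∈ ℝ^d, let r_a, r_b > 0, and let B_a, B_b denote the closed balls in ℝ^d of radius r_a centered at a and radius r_b centered at b. Let f̃ ∈ ℕ and let φ : ℝ^d × ℝ^d → ℝ be such that for all multi-indices α, β ∈ ℕ^d with |α| ≤ f̃+1 and |β| ≤ f̃+1 the mixed partial derivative D^α_x D^β_y φ(x,y) exists and is continuous on B_a × B_b. Let ψ, ψ' ∈ ℝ^n satisfy: (i) the moment conditions Σ_{h=1}^n ψ[h] s_h^α = 0 and Σ_{e=1}^n ψ'[e] s_e^α = 0 for every multi-index α with |α| ≤ f̃; (ii) the support conditions ψ[h] = 0 whenever s_h ∉ B_a and ψ'[e] = 0 whenever s_e ∉ B_b; (iii) the ℓ¹ bounds Σ_{h=1}^n |ψ[h]| ≤ 1 and Σ_{e=1}^n |ψ'[e]| ≤ 1. Then |Σ_{h=1}^n Σ_{e=1}^n ψ[h] ψ'[e] φ(s_h, s_e)| ≤ Σ_{|α|=f̃+1} Σ_{|β|=f̃+1}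 (r_a^{|α|}/α!) (r_b^{|β|}/β!) · sup_{x ∈ B_a, y ∈ B_b} |D^α_x D^β_y φ(x,y)|. -/
open Finset Metric

/-- The partial derivative in the `i`-th coordinate direction of a function on `ℝ^d`. -/
noncomputable def coordPDeriv (d : ℕ) (i : Fin d)
    (f : EuclideanSpace ℝ (Fin d) → ℝ) : EuclideanSpace ℝ (Fin d) → ℝ :=
  fun x => fderiv ℝ f x (EuclideanSpace.single i 1)

/-- The mixed partial derivative `D^α` of a function on `ℝ^d`, for a multi-index
`α : Fin d → ℕ` (the `i`-th coordinate derivative being taken `α i` times). -/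
noncomputable def mixedPDeriv (d : ℕ) (α : Fin d → ℕ)
    (f : EuclideanSpace ℝ (Fin d) → ℝ) : EuclideanSpace ℝ (Fin d) → ℝ :=
  (List.finRange d).foldr (fun i g => (coordPDeriv d i)^[α i] g) f

/-- The mixed partial derivative `D^α_x D^β_y φ (x, y)` of a two-argument function
`φ : ℝ^d × ℝ^d → ℝ`. -/
noncomputable def mixedPDerivXY (d : ℕ) (α β : Fin d → ℕ)
    (φ : EuclideanSpace ℝ (Fin d) → EuclideanSpace ℝ (Fin d) → ℝ)
    (x y : EuclideanSpace ℝ (Fin d)) : ℝ :=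
  mixedPDeriv d α (fun x' => mixedPDeriv d β (fun y' => φ x' y') y) x

/-- The (finite) set of multi-indices `α : Fin d → ℕ` with `|α| = k`. -/
def multiIdx (d k : ℕ) : Finset (Fin d → ℕ) :=
  (Fintype.piFinset fun _ : Fin d => Finset.range (k + 1)).filter fun α => ∑ i, α i = k

/-! Taylor-expand to order `m` around the centre `a` of the ball. The moment conditions
annihilate the Taylor polynomial, so `∑ ψ_h f(s_h) = ∑ ψ_h (f(s_h) - P_m f(s_h))`, and each
Lagrange remainder is at most `∑_{|α| = m+1} r^{m+1}/α! · sup |D^α f|`; the `ℓ¹` bound on `ψ`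
finishes the one-variable estimate. Along the segment `t ↦ a + t (p - a)` the derivatives come out
as ordered words `∂_{L 0} ⋯ ∂_{L (k-1)}`; Schwarz's theorem and the count
`#{L | L contains each i exactly α i times} = k!/α!` regroup them by multi-index. The two-variable
bound applies this first in `x`, to `x ↦ D^β_y φ(x, y)`, and then in `y`, to
`y ↦ ∑_h ψ_h φ(s_h, y)`. -/

noncomputable section

local notation "𝔼" d:max => EuclideanSpace ℝ (Fin d)

variable {d : ℕ}

lemma mem_multiIdx {k : ℕ} {α : Fin d → ℕ} : α ∈ multiIdx d k ↔ ∑ i, α i = k := by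
  refine ⟨fun h => (mem_filter.1 h).2, fun h => mem_filter.2 ⟨?_, h⟩⟩
  exact Fintype.mem_piFinset.2 fun i => mem_range.2 <|
    Nat.lt_succ_of_le (h ▸ single_le_sum (fun j _ => Nat.zero_le (α j)) (mem_univ i))

def iterPDeriv (L : List (Fin d)) (f : 𝔼 d → ℝ) : 𝔼 d → ℝ :=
  L.foldr (coordPDeriv d) f

@[simp] lemma iterPDeriv_nil (f : 𝔼 d → ℝ) : iterPDeriv [] f = f := rfl

@[simp] lemma iterPDeriv_cons (i : Fin d) (L : List (Fin d)) (f : 𝔼 d → ℝ) :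
    iterPDeriv (i :: L) f = coordPDeriv d i (iterPDeriv L f) := rfl

lemma iterPDeriv_append (L M : List (Fin d)) (f : 𝔼 d → ℝ) :
    iterPDeriv (L ++ M) f = iterPDeriv L (iterPDeriv M f) :=
  List.foldr_append ..

lemma iterPDeriv_replicate (k : ℕ) (i : Fin d) (f : 𝔼 d → ℝ) :
    iterPDeriv (List.replicate k i) f = (coordPDeriv d i)^[k] f := by
  induction k with
  | zero => rfl
  | succ k ih => rw [List.replicate_succ, iterPDeriv_cons, ih, Function.iterate_succ_apply']

def multiIdxList (α : Fin d → ℕ) : List (Fin d) :=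
  (List.finRange d).flatMap fun i => List.replicate (α i) i

lemma count_multiIdxList (α : Fin d → ℕ) (i : Fin d) : (multiIdxList α).count i = α i := by
  rw [multiIdxList, List.count_flatMap, ← Fin.sum_univ_def]
  simp [List.count_replicate]

lemma length_multiIdxList (α : Fin d → ℕ) : (multiIdxList α).length = ∑ i, α i := by
  simp [multiIdxList, List.length_flatMap, ← Fin.sum_univ_def]

lemma mixedPDeriv_eq_iterPDeriv (α : Fin d → ℕ) (f : 𝔼 d → ℝ) :
    mixedPDeriv d α f = iterPDeriv (multiIdxList α) f := by
  unfold mixedPDeriv multiIdxList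
  induction List.finRange d with
  | nil => rfl
  | cons i l ih => rw [List.foldr_cons, ih, List.flatMap_cons, iterPDeriv_append,
      iterPDeriv_replicate]

@[simp] lemma mixedPDeriv_zero (f : 𝔼 d → ℝ) : mixedPDeriv d 0 f = f := by
  rw [mixedPDeriv_eq_iterPDeriv,
    List.eq_nil_of_length_eq_zero (l := multiIdxList 0) (by simp [length_multiIdxList])]
  rfl

lemma multiIdxList_count_perm (L : List (Fin d)) : (multiIdxList fun i => L.count i).Perm L :=
  List.perm_iff_count.2 fun i => count_multiIdxList _ i

lemma sum_count_eq_length (L : List (Fin d)) : ∑ i, L.count i = L.length := by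
  simpa using Multiset.sum_count_eq_card (s := univ) (m := (L : Multiset (Fin d))) (by simp)

lemma ContDiffAt.coordPDeriv {f : 𝔼 d → ℝ} {x : 𝔼 d} {n : ℕ} (i : Fin d)
    (hf : ContDiffAt ℝ (n + 1 : ℕ) f x) : ContDiffAt ℝ n (coordPDeriv d i f) x :=
  (hf.fderiv_right (by norm_cast)).clm_apply contDiffAt_const

lemma ContDiffAt.iterPDeriv {f : 𝔼 d → ℝ} {x : 𝔼 d} {N n : ℕ} (hf : ContDiffAt ℝ N f x)
    (L : List (Fin d)) (hn : n + L.length ≤ N) : ContDiffAt ℝ n (iterPDeriv L f) x := by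
  induction L generalizing n with
  | nil => exact hf.of_le (by simpa using hn)
  | cons i L ih => exact (ih (n := n + 1) (by simp at hn; omega)).coordPDeriv i

lemma coordPDeriv_comm {f : 𝔼 d → ℝ} {x : 𝔼 d} (hf : ContDiffAt ℝ 2 f x) (i j : Fin d) :
    coordPDeriv d i (coordPDeriv d j f) x = coordPDeriv d j (coordPDeriv d i f) x := by
  have hd : DifferentiableAt ℝ (fderiv ℝ f) x :=
    (hf.fderiv_right (m := 1) (by norm_num)).differentiableAt one_ne_zero
  unfold coordPDeriv
  rw [fderiv_clm_apply hd (differentiableAt_const _), fderiv_clm_apply hd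
    (differentiableAt_const _)]
  simpa using (hf.isSymmSndFDerivAt (by simp)) (EuclideanSpace.single i 1)
    (EuclideanSpace.single j 1)

lemma iterPDeriv_perm {L L' : List (Fin d)} (hL : L.Perm L') {f : 𝔼 d → ℝ} {x : 𝔼 d}
    (hf : ContDiffAt ℝ L.length f x) : iterPDeriv L f x = iterPDeriv L' f x := by
  induction hL generalizing x with
  | nil => rfl
  | cons i _ ih =>
    have hnear : ∀ᶠ y in nhds x, ContDiffAt ℝ _ f y := hf.eventually (by simp)
    simp only [iterPDeriv_cons, coordPDeriv]
    rw [Filter.EventuallyEq.fderiv_eq (hnear.mono fun y hy => ih (hy.of_le (by simp)))]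
  | swap i j l => exact coordPDeriv_comm (hf.iterPDeriv l (by simp; omega)) j i
  | trans h₁₂ _ ih₁ ih₂ => exact (ih₁ hf).trans (ih₂ (h₁₂.length_eq ▸ hf))

lemma iterPDeriv_const_smul (c : ℝ) (L : List (Fin d)) (f : 𝔼 d → ℝ) :
    iterPDeriv L (c • f) = c • iterPDeriv L f := by
  induction L with
  | nil => rfl
  | cons i L ih =>
    ext x
    simp [coordPDeriv, ih, fderiv_const_smul_field]

lemma iterPDeriv_finsetSum {ι : Type*} (A : Finset ι) (g : ι → 𝔼 d → ℝ) (L : List (Fin d))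
    {x : 𝔼 d} (hg : ∀ h ∈ A, ContDiffAt ℝ L.length (g h) x) :
    iterPDeriv L (∑ h ∈ A, g h) x = ∑ h ∈ A, iterPDeriv L (g h) x := by
  induction L generalizing x with
  | nil => simp
  | cons i L ih =>
    have hnear : ∀ᶠ y in nhds x, ∀ h ∈ A, ContDiffAt ℝ (i :: L).length (g h) y :=
      (Filter.eventually_all_finset A).2 fun h hh => (hg h hh).eventually (by simp)
    have hdiff : ∀ h ∈ A, DifferentiableAt ℝ (iterPDeriv L (g h)) x := fun h hh =>
      ((hg h hh).iterPDeriv (n := 1) L (by simp; omega)).differentiableAt one_ne_zero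
    simp only [iterPDeriv_cons, coordPDeriv]
    rw [Filter.EventuallyEq.fderiv_eq (hnear.mono fun y hy => ih fun h hh =>
      (hy h hh).of_le (by simp)), fderiv_fun_sum hdiff, _root_.sum_apply]

lemma card_count_ofFn_eq_mul_prod_factorial {ι : Type*} [Fintype ι] [DecidableEq ι] {k : ℕ}
    {α : ι → ℕ} (hα : ∑ i, α i = k) :
    #{L : Fin k → ι | (fun i => (List.ofFn L).count i) = α} * ∏ i, (α i).factorial =
      k.factorial := by
  induction k generalizing α with
  | zero =>
    obtain rfl : α = 0 := funext fun i => sum_eq_zero_iff.1 hα i (mem_univ i)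
    simp [funext_iff]
  | succ k ih =>
    have hsplit : #{L : Fin (k + 1) → ι | (fun i => (List.ofFn L).count i) = α} =
        ∑ i, #{L : Fin k → ι | (fun j => (i :: List.ofFn L).count j) = α} := by
      simp only [card_filter]
      rw [← (Fin.consEquiv fun _ => ι).sum_comp, Fintype.sum_prod_type]
      simp [Fin.consEquiv]
    have hterm : ∀ i, #{L : Fin k → ι | (fun j => (i :: List.ofFn L).count j) = α} *
        ∏ j, (α j).factorial = α i * k.factorial := by
      intro i
      rcases Nat.eq_zero_or_pos (α i) with h0 | hpos
      · rw [h0, zero_mul, filter_false_of_mem, card_empty, zero_mul]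
        intro L _ hL
        simpa [h0] using congrFun hL i
      set β := Function.update α i (α i - 1)
      have hβi : β i = α i - 1 := Function.update_self ..
      have hβc : ∀ j ∈ ({i}ᶜ : Finset ι), β j = α j := fun j hj =>
        Function.update_of_ne (mem_compl.1 hj ∘ mem_singleton.2) ..
      have hβ : ∑ j, β j = k := by
        have hα' : α i + ∑ j ∈ {i}ᶜ, α j = k + 1 := (Fintype.sum_eq_add_sum_compl i α).symm.trans hα
        rw [Fintype.sum_eq_add_sum_compl i, hβi, sum_congr rfl hβc]
        change α i - 1 + ∑ j ∈ {i}ᶜ, α j = k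
        omega
      have hcount : ∀ L : Fin k → ι, (fun j => (i :: List.ofFn L).count j) = α ↔
          (fun j => (List.ofFn L).count j) = β := by
        intro L
        simp only [funext_iff, List.count_cons]
        refine forall_congr' fun j => ?_
        by_cases hj : j = i
        · subst hj; simp [β]; omega
        · simp [β, hj, Ne.symm hj]
      have hprod : ∏ j, (α j).factorial = α i * ∏ j, (β j).factorial := by
        rw [Fintype.prod_eq_mul_prod_compl i, Fintype.prod_eq_mul_prod_compl i, hβi,
          prod_congr rfl fun j hj => by rw [← hβc j hj], ← mul_assoc,
          Nat.mul_factorial_pred hpos.ne']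
      rw [filter_congr fun L _ => hcount L, hprod, mul_left_comm, ih hβ]
    rw [hsplit, sum_mul, sum_congr rfl fun i _ => hterm i, ← sum_mul, hα, Nat.factorial_succ]

/-- The `k`-th derivative of `t ↦ f (x + t • v)` at `t = 0`, expanded in coordinates. -/
def iteratedLineDeriv (k : ℕ) (f : 𝔼 d → ℝ) (x v : 𝔼 d) : ℝ :=
  ∑ L : Fin k → Fin d, (∏ j, v (L j)) * iterPDeriv (List.ofFn L) f x

lemma iteratedLineDeriv_zero (f : 𝔼 d → ℝ) (x v : 𝔼 d) : iteratedLineDeriv 0 f x v = f x := by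
  simp [iteratedLineDeriv]

lemma fderiv_apply_eq_sum_coordPDeriv (f : 𝔼 d → ℝ) (x v : 𝔼 d) :
    fderiv ℝ f x v = ∑ i, v i * coordPDeriv d i f x := by
  conv_lhs => rw [← (EuclideanSpace.basisFun (Fin d) ℝ).sum_repr v]
  simp [coordPDeriv]

lemma hasDerivAt_iteratedLineDeriv {k : ℕ} {f : 𝔼 d → ℝ} {a v : 𝔼 d} {t : ℝ}
    (hf : ContDiffAt ℝ (k + 1 : ℕ) f (a + t • v)) :
    HasDerivAt (fun t => iteratedLineDeriv k f (a + t • v) v)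
      (iteratedLineDeriv (k + 1) f (a + t • v) v) t := by
  have hline : HasDerivAt (fun t : ℝ => a + t • v) v t := by
    simpa using ((hasDerivAt_id t).smul_const v).const_add a
  have hterm : ∀ L : Fin k → Fin d, HasDerivAt
      (fun t => (∏ j, v (L j)) * iterPDeriv (List.ofFn L) f (a + t • v))
      ((∏ j, v (L j)) * ∑ i, v i * iterPDeriv (i :: List.ofFn L) f (a + t • v)) t := by
    intro L
    have hd : DifferentiableAt ℝ (iterPDeriv (List.ofFn L) f) (a + t • v) :=
      (hf.iterPDeriv (n := 1) _ (by simp; omega)).differentiableAt one_ne_zero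
    have h := hd.hasFDerivAt.comp_hasDerivAt t hline
    rw [fderiv_apply_eq_sum_coordPDeriv] at h
    exact h.const_mul _
  refine (HasDerivAt.fun_sum (u := univ) fun L _ => hterm L).congr_deriv ?_
  rw [iteratedLineDeriv, ← (Fin.consEquiv fun _ => Fin d).sum_comp, Fintype.sum_prod_type, sum_comm]
  simp [Fin.consEquiv, Fin.prod_univ_succ, mul_sum, mul_assoc, mul_left_comm]

lemma iteratedDeriv_comp_line {f : 𝔼 d → ℝ} {a v : 𝔼 d} {N : ℕ} {U : Set ℝ} (hU : IsOpen U)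
    (hf : ∀ t ∈ U, ContDiffAt ℝ N f (a + t • v)) {k : ℕ} (hk : k ≤ N) {t : ℝ} (ht : t ∈ U) :
    iteratedDeriv k (fun t => f (a + t • v)) t = iteratedLineDeriv k f (a + t • v) v := by
  induction k generalizing t with
  | zero => simp [iteratedLineDeriv_zero]
  | succ k ih =>
    have heq : iteratedDeriv k (fun t => f (a + t • v)) =ᶠ[nhds t]
        fun s => iteratedLineDeriv k f (a + s • v) v :=
      Filter.eventually_of_mem (hU.mem_nhds ht) fun s hs => ih (by omega) hs
    rw [iteratedDeriv_succ, heq.deriv_eq]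
    exact (hasDerivAt_iteratedLineDeriv ((hf t ht).of_le (by exact_mod_cast hk))).deriv

def remainderBound (d k : ℕ) (r : ℝ) (S : (Fin d → ℕ) → ℝ) : ℝ :=
  ∑ α ∈ multiIdx d k, r ^ k / ((∏ i, (α i).factorial : ℕ) : ℝ) * S α

lemma abs_iteratedLineDeriv_le {k : ℕ} {f : 𝔼 d → ℝ} {x v : 𝔼 d} {r : ℝ}
    {S : (Fin d → ℕ) → ℝ} (hf : ContDiffAt ℝ k f x) (hv : ‖v‖ ≤ r)
    (hS : ∀ α ∈ multiIdx d k, |mixedPDeriv d α f x| ≤ S α) :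
    |iteratedLineDeriv k f x v| ≤ k.factorial * remainderBound d k r S := by
  set cnt : (Fin k → Fin d) → Fin d → ℕ := fun L i => (List.ofFn L).count i
  have hcnt : ∀ L, cnt L ∈ multiIdx d k := fun L =>
    mem_multiIdx.2 (by simp [cnt, sum_count_eq_length])
  have hterm : ∀ L : Fin k → Fin d,
      |(∏ j, v (L j)) * iterPDeriv (List.ofFn L) f x| ≤ r ^ k * S (cnt L) := by
    intro L
    have hD : iterPDeriv (List.ofFn L) f x = mixedPDeriv d (cnt L) f x := by
      rw [mixedPDeriv_eq_iterPDeriv, iterPDeriv_perm (multiIdxList_count_perm _).symm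
        (by simpa using hf)]
    have hprod : |∏ j, v (L j)| ≤ r ^ k := by
      rw [abs_prod]
      exact (prod_le_prod (fun j _ => abs_nonneg _) fun j _ =>
        (Real.norm_eq_abs _ ▸ PiLp.norm_apply_le v (L j)).trans hv).trans_eq (Fin.prod_const k r)
    rw [abs_mul, hD]
    exact mul_le_mul hprod (hS _ (hcnt L)) (abs_nonneg _) (pow_nonneg ((norm_nonneg v).trans hv) _)
  calc |iteratedLineDeriv k f x v|
      ≤ ∑ L, r ^ k * S (cnt L) := (abs_sum_le_sum_abs _ _).trans (sum_le_sum fun L _ => hterm L)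
    _ = ∑ α ∈ multiIdx d k, #{L | cnt L = α} * (r ^ k * S α) := by
      rw [← sum_fiberwise_of_maps_to fun L _ => hcnt L]
      refine sum_congr rfl fun α _ => ?_
      rw [sum_congr rfl fun L hL => by rw [(mem_filter.1 hL).2], sum_const, nsmul_eq_mul]
    _ = k.factorial * remainderBound d k r S := by
      rw [remainderBound, mul_sum]
      refine sum_congr rfl fun α hα => ?_
      have hcard := card_count_ofFn_eq_mul_prod_factorial (mem_multiIdx.1 hα)
      have hpos : ((∏ i, (α i).factorial : ℕ) : ℝ) ≠ 0 := by positivity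
      rw [← hcard]
      field_simp
      push_cast
      ring

def taylorPoly (m : ℕ) (f : 𝔼 d → ℝ) (a p : 𝔼 d) : ℝ :=
  ∑ k ∈ range (m + 1), iteratedLineDeriv k f a (p - a) / k.factorial

lemma continuous_taylorPoly (m : ℕ) (f : 𝔼 d → ℝ) (a : 𝔼 d) : Continuous (taylorPoly m f a) := by
  unfold taylorPoly iteratedLineDeriv
  fun_prop

lemma abs_sub_taylorPoly_le_of_mem_ball {m : ℕ} {f : 𝔼 d → ℝ} {a : 𝔼 d} {r : ℝ}
    {S : (Fin d → ℕ) → ℝ} (hf : ∀ x ∈ ball a r, ContDiffAt ℝ (m + 1 : ℕ) f x)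
    (hS : ∀ α ∈ multiIdx d (m + 1), ∀ x ∈ ball a r, |mixedPDeriv d α f x| ≤ S α)
    {p : 𝔼 d} (hp : p ∈ ball a r) :
    |f p - taylorPoly m f a p| ≤ remainderBound d (m + 1) r S := by
  set v := p - a
  set U : Set ℝ := (fun t : ℝ => a + t • v) ⁻¹' ball a r
  have hU : IsOpen U := isOpen_ball.preimage (by fun_prop)
  have hIcc : Set.Icc (0 : ℝ) 1 ⊆ U := fun t ht =>
    (convex_ball a r).add_smul_sub_mem (mem_ball_self (pos_of_mem_ball hp)) hp ht
  have hfU : ∀ t ∈ U, ContDiffAt ℝ (m + 1 : ℕ) f (a + t • v) := fun t ht => hf _ ht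
  have hg : ∀ t ∈ U, ContDiffAt ℝ (m + 1 : ℕ) (fun t : ℝ => f (a + t • v)) t := fun t ht =>
    (hfU t ht).comp t (by fun_prop)
  have h01 : (0 : ℝ) ≤ 1 := zero_le_one
  have h0 : (0 : ℝ) ∈ Set.Icc 0 1 := ⟨le_rfl, h01⟩
  obtain ⟨t, ht, htaylor⟩ := taylor_mean_remainder_lagrange_iteratedDeriv
    (f := fun t : ℝ => f (a + t • v)) (n := m) zero_ne_one
    fun t ht => (hg t (hIcc (Set.uIcc_of_le h01 ▸ ht))).contDiffWithinAt
  rw [Set.uIoo_of_le h01] at ht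
  rw [Set.uIcc_of_le h01, taylor_within_apply] at htaylor
  have hpoly : ∑ k ∈ range (m + 1), ((k.factorial : ℝ)⁻¹ * (1 - 0) ^ k) •
      iteratedDerivWithin k (fun t : ℝ => f (a + t • v)) (Set.Icc 0 1) 0 = taylorPoly m f a p := by
    refine sum_congr rfl fun k hk => ?_
    have hk : k ≤ m + 1 := by simp at hk; omega
    rw [iteratedDerivWithin_eq_iteratedDeriv (uniqueDiffOn_Icc zero_lt_one)
      ((hg 0 (hIcc h0)).of_le (by exact_mod_cast hk)) h0,
      iteratedDeriv_comp_line hU hfU hk (hIcc h0)]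
    simp [div_eq_inv_mul, v]
  have hremainder := abs_iteratedLineDeriv_le (hfU t (hIcc (Set.Ioo_subset_Icc_self ht)))
    (mem_ball_iff_norm.1 hp).le fun α hα => hS α hα _ (hIcc (Set.Ioo_subset_Icc_self ht))
  rw [hpoly, iteratedDeriv_comp_line hU hfU le_rfl (hIcc (Set.Ioo_subset_Icc_self ht))] at htaylor
  simp only [one_smul, add_sub_cancel, sub_zero, one_pow, mul_one, v] at htaylor
  rw [htaylor, abs_div, Nat.abs_cast, div_le_iff₀ (by positivity), mul_comm]
  exact hremainder

/-- `coordPDeriv` is a full `fderiv`, which carries no information on the sphere, so Taylor's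
formula is used on the open ball only and the bound reaches the closed ball by continuity. -/
lemma abs_sub_taylorPoly_le {m : ℕ} {f : 𝔼 d → ℝ} {a : 𝔼 d} {r : ℝ} (hr : 0 < r)
    {S : (Fin d → ℕ) → ℝ} (hf : ∀ x ∈ ball a r, ContDiffAt ℝ (m + 1 : ℕ) f x)
    (hfc : ContinuousOn f (closedBall a r))
    (hS : ∀ α ∈ multiIdx d (m + 1), ∀ x ∈ ball a r, |mixedPDeriv d α f x| ≤ S α)
    {p : 𝔼 d} (hp : p ∈ closedBall a r) :
    |f p - taylorPoly m f a p| ≤ remainderBound d (m + 1) r S := by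
  have hclosed : IsClosed (closedBall a r ∩
      (fun p => |f p - taylorPoly m f a p|) ⁻¹' Set.Iic (remainderBound d (m + 1) r S)) :=
    (hfc.sub (continuous_taylorPoly m f a).continuousOn).abs.preimage_isClosed_of_isClosed
      isClosed_closedBall isClosed_Iic
  rw [← closure_ball a hr.ne'] at hp
  exact (hclosed.closure_subset_iff.2 (fun q hq => ⟨ball_subset_closedBall hq,
    abs_sub_taylorPoly_le_of_mem_ball hf hS hq⟩) hp).2

lemma sum_mul_eval_eq_zero_of_totalDegree_le {ι σ R : Type*} [Fintype ι] [Fintype σ]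
    [CommSemiring R] {ψ : ι → R} {x : ι → σ → R} {m : ℕ}
    (hmom : ∀ α : σ → ℕ, ∑ i, α i ≤ m → ∑ h, ψ h * ∏ i, x h i ^ α i = 0)
    {P : MvPolynomial σ R} (hP : P.totalDegree ≤ m) :
    ∑ h, ψ h * MvPolynomial.eval (x h) P = 0 := by
  simp_rw [MvPolynomial.eval_eq', mul_sum]
  rw [sum_comm]
  refine sum_eq_zero fun μ hμ => ?_
  have hdeg : ∑ i, μ i ≤ m :=
    ((Finsupp.sum_fintype μ _ fun _ => rfl).symm.trans_le (MvPolynomial.le_totalDegree hμ)).trans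
      hP
  simp_rw [mul_left_comm (ψ _)]
  rw [← mul_sum, hmom μ hdeg, mul_zero]

lemma sum_mul_taylorPoly_eq_zero {ι : Type*} [Fintype ι] {m : ℕ} (f : 𝔼 d → ℝ) (a : 𝔼 d)
    {ψ : ι → ℝ} {s : ι → 𝔼 d}
    (hmom : ∀ α : Fin d → ℕ, ∑ i, α i ≤ m → ∑ h, ψ h * ∏ i, s h i ^ α i = 0) :
    ∑ h, ψ h * taylorPoly m f a (s h) = 0 := by
  have hmonomial : ∀ k ≤ m, ∀ L : Fin k → Fin d, ∑ h, ψ h * ∏ j, (s h - a) (L j) = 0 := by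
    intro k hk L
    have hdeg : (∏ j, (MvPolynomial.X (L j) - MvPolynomial.C (a (L j)) :
        MvPolynomial (Fin d) ℝ)).totalDegree ≤ m :=
      (MvPolynomial.totalDegree_finsetProd _ _).trans <| (sum_le_card_nsmul _ _ 1 fun j _ =>
        (MvPolynomial.totalDegree_sub_C_le _ _).trans (MvPolynomial.totalDegree_X _).le).trans
        (by simpa using hk)
    simpa using sum_mul_eval_eq_zero_of_totalDegree_le (x := fun h i => s h i) hmom hdeg
  simp only [taylorPoly, iteratedLineDeriv, sum_div, mul_sum]
  rw [sum_comm]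
  refine sum_eq_zero fun k hk => ?_
  rw [sum_comm]
  refine sum_eq_zero fun L _ => ?_
  calc ∑ h, ψ h * ((∏ j, (s h - a) (L j)) * iterPDeriv (List.ofFn L) f a / k.factorial)
      = (∑ h, ψ h * ∏ j, (s h - a) (L j)) * (iterPDeriv (List.ofFn L) f a / k.factorial) := by
        rw [sum_mul]; exact sum_congr rfl fun h _ => by ring
    _ = 0 := by rw [hmonomial k (by simp at hk; omega) L, zero_mul]

theorem abs_sum_mul_le_remainderBound {ι : Type*} [Fintype ι] {m : ℕ} {f : 𝔼 d → ℝ}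
    {a : 𝔼 d} {r : ℝ} (hr : 0 < r) {S : (Fin d → ℕ) → ℝ}
    (hf : ∀ x ∈ ball a r, ContDiffAt ℝ (m + 1 : ℕ) f x) (hfc : ContinuousOn f (closedBall a r))
    (hS : ∀ α ∈ multiIdx d (m + 1), ∀ x ∈ ball a r, |mixedPDeriv d α f x| ≤ S α)
    {ψ : ι → ℝ} {s : ι → 𝔼 d}
    (hmom : ∀ α : Fin d → ℕ, ∑ i, α i ≤ m → ∑ h, ψ h * ∏ i, s h i ^ α i = 0)
    (hsupp : ∀ h, s h ∉ closedBall a r → ψ h = 0) (hl1 : ∑ h, |ψ h| ≤ 1) :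
    |∑ h, ψ h * f (s h)| ≤ remainderBound d (m + 1) r S := by
  set B := remainderBound d (m + 1) r S
  have hB : 0 ≤ B :=
    (abs_nonneg _).trans (abs_sub_taylorPoly_le hr hf hfc hS (mem_closedBall_self hr.le))
  have hterm : ∀ h, |ψ h| * |f (s h) - taylorPoly m f a (s h)| ≤ |ψ h| * B := by
    intro h
    by_cases hh : s h ∈ closedBall a r
    · exact mul_le_mul_of_nonneg_left (abs_sub_taylorPoly_le hr hf hfc hS hh) (abs_nonneg _)
    · simp [hsupp h hh]
  calc |∑ h, ψ h * f (s h)| = |∑ h, ψ h * (f (s h) - taylorPoly m f a (s h))| := by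
        simp [mul_sub, sum_sub_distrib, sum_mul_taylorPoly_eq_zero f a hmom]
    _ ≤ ∑ h, |ψ h| * |f (s h) - taylorPoly m f a (s h)| := by
        simpa [abs_mul] using abs_sum_le_sum_abs
          (fun h => ψ h * (f (s h) - taylorPoly m f a (s h))) univ
    _ ≤ ∑ h, |ψ h| * B := sum_le_sum fun h _ => hterm h
    _ ≤ B := by rw [← sum_mul]; exact mul_le_of_le_one_left hB hl1

lemma ContDiffAt.iterPDeriv_right {Φ : 𝔼 d → 𝔼 d → ℝ} {p : 𝔼 d × 𝔼 d} {N n : ℕ}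
    (hΦ : ContDiffAt ℝ N (fun q : 𝔼 d × 𝔼 d => Φ q.1 q.2) p) (L : List (Fin d))
    (hn : n + L.length ≤ N) :
    ContDiffAt ℝ n (fun q : 𝔼 d × 𝔼 d => _root_.iterPDeriv L (Φ q.1) q.2) p := by
  induction L generalizing n with
  | nil => exact hΦ.of_le (by simpa using hn)
  | cons i L ih =>
    have h := ih (n := n + 1) (by simp at hn; omega)
    have hfderiv : ContDiffAt ℝ n
        (fun q : 𝔼 d × 𝔼 d => fderiv ℝ (_root_.iterPDeriv L (Φ q.1)) q.2) p :=
      ContDiffAt.fderiv (f := fun q y => _root_.iterPDeriv L (Φ q.1) y) (g := Prod.snd)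
        (h.comp (p, p.2) (contDiff_fst.fst.prodMk contDiff_snd).contDiffAt) contDiffAt_snd
        (by norm_cast)
    exact hfderiv.clm_apply contDiffAt_const

lemma abs_le_sSup_of_continuousOn {X Y : Type*} [TopologicalSpace X] [TopologicalSpace Y]
    {A : Set X} {B : Set Y} (hA : IsCompact A) (hB : IsCompact B) {F : X → Y → ℝ}
    (hF : ContinuousOn (fun q : X × Y => F q.1 q.2) (A ×ˢ B)) {x : X} {y : Y} (hx : x ∈ A)
    (hy : y ∈ B) : |F x y| ≤ sSup {t | ∃ x ∈ A, ∃ y ∈ B, t = |F x y|} := by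
  refine le_csSup (((hA.prod hB).bddAbove_image hF.abs).mono ?_) ⟨x, hx, y, hy, rfl⟩
  rintro t ⟨x, hx, y, hy, rfl⟩
  exact ⟨(x, y), ⟨hx, hy⟩, rfl⟩

lemma mixedPDeriv_sum_smul {ι : Type*} [Fintype ι] (c : ι → ℝ) (g : ι → 𝔼 d → ℝ)
    (β : Fin d → ℕ) {y : 𝔼 d} (hg : ∀ h, ContDiffAt ℝ (∑ i, β i : ℕ) (c h • g h) y) :
    mixedPDeriv d β (fun y => ∑ h, (c h • g h) y) y = ∑ h, c h * mixedPDeriv d β (g h) y := by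
  rw [← sum_fn, mixedPDeriv_eq_iterPDeriv,
    iterPDeriv_finsetSum _ _ _ fun h _ => length_multiIdxList β ▸ hg h]
  simp [mixedPDeriv_eq_iterPDeriv, iterPDeriv_const_smul]

lemma abs_sum_mul_mixedPDeriv_le {ι : Type*} [Fintype ι] {m : ℕ} {φ : 𝔼 d → 𝔼 d → ℝ}
    {a b : 𝔼 d} {ra rb : ℝ} (hra : 0 < ra)
    (hφ : ContDiffOn ℝ (2 * (m + 1) : ℕ) (fun q : 𝔼 d × 𝔼 d => φ q.1 q.2)
      (closedBall a ra ×ˢ closedBall b rb))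
    {β : Fin d → ℕ} (hβ : β ∈ multiIdx d (m + 1)) {y : 𝔼 d} (hy : y ∈ ball b rb)
    (hβc : ContinuousOn (fun x => mixedPDeriv d β (φ x) y) (closedBall a ra))
    {M : (Fin d → ℕ) → ℝ} (hM : ∀ α ∈ multiIdx d (m + 1), ∀ x ∈ ball a ra,
      |mixedPDerivXY d α β φ x y| ≤ M α)
    {ψ : ι → ℝ} {s : ι → 𝔼 d}
    (hmom : ∀ α : Fin d → ℕ, ∑ i, α i ≤ m → ∑ h, ψ h * ∏ i, s h i ^ α i = 0)
    (hsupp : ∀ h, s h ∉ closedBall a ra → ψ h = 0) (hl1 : ∑ h, |ψ h| ≤ 1) :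
    |∑ h, ψ h * mixedPDeriv d β (φ (s h)) y| ≤ remainderBound d (m + 1) ra M := by
  refine abs_sum_mul_le_remainderBound (f := fun x => mixedPDeriv d β (φ x) y) hra
    (fun x hx => ?_) hβc hM hmom hsupp hl1
  simp only [mixedPDeriv_eq_iterPDeriv]
  refine ((hφ.contDiffAt (prod_mem_nhds (closedBall_mem_nhds_of_mem hx)
    (closedBall_mem_nhds_of_mem hy))).iterPDeriv_right (multiIdxList β) ?_).comp x
    (by fun_prop : ContDiffAt ℝ _ (fun x => (x, y)) x)
  rw [length_multiIdxList, mem_multiIdx.1 hβ]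
  omega

theorem abs_sum_sum_mul_le_remainderBound {ι κ : Type*} [Fintype ι] [Fintype κ] {m : ℕ}
    {φ : 𝔼 d → 𝔼 d → ℝ} {a b : 𝔼 d} {ra rb : ℝ} (hra : 0 < ra) (hrb : 0 < rb)
    (hφ : ContDiffOn ℝ (2 * (m + 1) : ℕ) (fun q : 𝔼 d × 𝔼 d => φ q.1 q.2)
      (closedBall a ra ×ˢ closedBall b rb))
    (hφc : ∀ β ∈ multiIdx d (m + 1), ContinuousOn
      (fun q : 𝔼 d × 𝔼 d => mixedPDerivXY d 0 β φ q.1 q.2) (closedBall a ra ×ˢ closedBall b rb))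
    {M : (Fin d → ℕ) → (Fin d → ℕ) → ℝ} (hM : ∀ α ∈ multiIdx d (m + 1), ∀ β ∈ multiIdx d (m + 1),
      ∀ x ∈ ball a ra, ∀ y ∈ ball b rb, |mixedPDerivXY d α β φ x y| ≤ M α β)
    {ψ : ι → ℝ} {s : ι → 𝔼 d}
    (hmom : ∀ α : Fin d → ℕ, ∑ i, α i ≤ m → ∑ h, ψ h * ∏ i, s h i ^ α i = 0)
    (hsupp : ∀ h, s h ∉ closedBall a ra → ψ h = 0) (hl1 : ∑ h, |ψ h| ≤ 1)
    {ψ' : κ → ℝ} {s' : κ → 𝔼 d}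
    (hmom' : ∀ α : Fin d → ℕ, ∑ i, α i ≤ m → ∑ e, ψ' e * ∏ i, s' e i ^ α i = 0)
    (hsupp' : ∀ e, s' e ∉ closedBall b rb → ψ' e = 0) (hl1' : ∑ e, |ψ' e| ≤ 1) :
    |∑ h, ∑ e, ψ h * ψ' e * φ (s h) (s' e)| ≤
      remainderBound d (m + 1) rb fun β => remainderBound d (m + 1) ra (M · β) := by
  have hrow : ∀ h, ContDiffOn ℝ (2 * (m + 1) : ℕ) (ψ h • φ (s h)) (closedBall b rb) := by
    intro h
    by_cases hψ : ψ h = 0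
    · rw [hψ, zero_smul ℝ]
      exact contDiffOn_const
    · exact (hφ.comp (f := fun y => (s h, y)) (by fun_prop)
        fun y hy => ⟨not_not.1 (mt (hsupp h) hψ), hy⟩).const_smul (ψ h)
  have hT := ContDiffOn.sum fun h (_ : h ∈ univ) => hrow h
  have hT' : ∀ y ∈ ball b rb, ContDiffAt ℝ (2 * (m + 1) : ℕ)
      (fun y => ∑ h, (ψ h • φ (s h)) y) y := fun y hy =>
    hT.contDiffAt (closedBall_mem_nhds_of_mem hy)
  calc |∑ h, ∑ e, ψ h * ψ' e * φ (s h) (s' e)|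
      = |∑ e, ψ' e * ∑ h, (ψ h • φ (s h)) (s' e)| := by
        rw [sum_comm]
        simp only [mul_sum, Pi.smul_apply, smul_eq_mul, mul_left_comm, mul_assoc]
    _ ≤ _ := by
      refine abs_sum_mul_le_remainderBound hrb (fun y hy => (hT' y hy).of_le (by norm_cast; omega))
        hT.continuousOn (fun β hβ y hy => ?_) hmom' hsupp' hl1'
      have hβ' := mem_multiIdx.1 hβ
      rw [mixedPDeriv_sum_smul _ _ _ fun h => ((hrow h).contDiffAt
        (closedBall_mem_nhds_of_mem hy)).of_le (by rw [hβ']; norm_cast; omega)]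
      refine abs_sum_mul_mixedPDeriv_le hra hφ hβ hy ?_ (fun α hα x hx => hM α hα β hβ x hx y hy)
        hmom hsupp hl1
      simpa [mixedPDerivXY, Function.comp_def] using (hφc β hβ).comp
        (f := fun x => (x, y)) (by fun_prop) fun x hx => ⟨hx, ball_subset_closedBall hy⟩

end

/-- Lemma 1 of the paper: if `ψ, ψ'` annihilate all monomials of degree at most `f̃`, are
supported on the balls `B_a = closedBall a r_a`, `B_b = closedBall b r_b` respectively, and
have `ℓ¹` norm at most one, then the covariance interaction `ψᵀ C ψ'`, with
`C_{h e} = φ(s_h, s_e)`, is bounded by the Taylor-remainder expression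
`∑_{|α| = f̃+1} ∑_{|β| = f̃+1} (r_a^{|α|}/α!)(r_b^{|β|}/β!) sup_{x ∈ B_a, y ∈ B_b}
|D^α_x D^β_y φ(x,y)|`. -/
theorem multilevel_covariance_decay (d n : ℕ)
    (s : Fin n → EuclideanSpace ℝ (Fin d))
    (a b : EuclideanSpace ℝ (Fin d)) (ra rb : ℝ) (hra : 0 < ra) (hrb : 0 < rb)
    (ft : ℕ)
    (φ : EuclideanSpace ℝ (Fin d) → EuclideanSpace ℝ (Fin d) → ℝ)
    (hsmooth : ContDiffOn ℝ ((2 * (ft + 1) : ℕ) : ℕ∞)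
      (fun q : EuclideanSpace ℝ (Fin d) × EuclideanSpace ℝ (Fin d) => φ q.1 q.2)
      (closedBall a ra ×ˢ closedBall b rb))
    (hcont : ∀ α β : Fin d → ℕ, (∑ i, α i) ≤ ft + 1 → (∑ i, β i) ≤ ft + 1 →
      ContinuousOn
        (fun q : EuclideanSpace ℝ (Fin d) × EuclideanSpace ℝ (Fin d) =>
          mixedPDerivXY d α β φ q.1 q.2)
        (closedBall a ra ×ˢ closedBall b rb))
    (ψ ψ' : Fin n → ℝ)
    (hmom : ∀ α : Fin d → ℕ, (∑ i, α i) ≤ ft →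
      ∑ h, ψ h * ∏ i, (s h i) ^ (α i) = 0)
    (hmom' : ∀ α : Fin d → ℕ, (∑ i, α i) ≤ ft →
      ∑ e, ψ' e * ∏ i, (s e i) ^ (α i) = 0)
    (hsupp : ∀ h, s h ∉ closedBall a ra → ψ h = 0)
    (hsupp' : ∀ e, s e ∉ closedBall b rb → ψ' e = 0)
    (hl1 : ∑ h, |ψ h| ≤ 1) (hl1' : ∑ e, |ψ' e| ≤ 1) :
    |∑ h, ∑ e, ψ h * ψ' e * φ (s h) (s e)| ≤
      ∑ α ∈ multiIdx d (ft + 1), ∑ β ∈ multiIdx d (ft + 1),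
        (ra ^ (∑ i, α i) / ((∏ i, (α i).factorial : ℕ) : ℝ)) *
          (rb ^ (∑ i, β i) / ((∏ i, (β i).factorial : ℕ) : ℝ)) *
            sSup {t : ℝ | ∃ x ∈ closedBall a ra, ∃ y ∈ closedBall b rb,
              t = |mixedPDerivXY d α β φ x y|} := by
  refine (abs_sum_sum_mul_le_remainderBound hra hrb (by exact_mod_cast hsmooth)
    (fun β hβ => hcont 0 β (by simp) (mem_multiIdx.1 hβ).le)
    (M := fun α β => sSup {t : ℝ | ∃ x ∈ closedBall a ra, ∃ y ∈ closedBall b rb,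
      t = |mixedPDerivXY d α β φ x y|})
    (fun α hα β hβ x hx y hy => abs_le_sSup_of_continuousOn (isCompact_closedBall a ra)
      (isCompact_closedBall b rb) (hcont α β (mem_multiIdx.1 hα).le (mem_multiIdx.1 hβ).le)
      (ball_subset_closedBall hx) (ball_subset_closedBall hy))
    hmom hsupp hl1 hmom' hsupp' hl1').trans_eq ?_
  simp only [remainderBound, mul_sum]
  rw [sum_comm]
  refine sum_congr rfl fun α hα => sum_congr rfl fun β hβ => ?_
  rw [mem_multiIdx.1 hα, mem_multiIdx.1 hβ]
  ring
end

section
/- Let C be a real symmetric positive definite n×n matrix, M a real n×p matrix of full column rank p, W a real (n−p)×n matrix and L a real p×n matrix such that the stacked n×n matrix P := [W; L] is orthogonal (Pᵀ P = P Pᵀ = I_n) and W M = 0. Define C_W := W C Wᵀ, S_W := L C Lᵀ, and a_W := W C Lᵀ. Then the Schur complement S_W − a_Wᵀ C_W⁻¹ a_W is symmetric positive definite, and with S̃_W := (S_W − a_Wᵀ C_W⁻¹ a_W)⁻¹ one has the identity Mᵀ C⁻¹ M = (L M)ᵀ S̃_W (L M). -/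
/-!
Conjugating by the orthogonal matrix `P = [W; L]` turns `C` into the positive definite block
matrix `K = P C Pᵀ = [C_W, a_W; a_Wᵀ, S_W]`, so the Schur complement of `C_W` in `K` is positive
definite, and its inverse is the lower right block of `K⁻¹ = P C⁻¹ Pᵀ`. Since `W M = 0` we have
`P M = [0; L M]`, and `Mᵀ C⁻¹ M = (P M)ᵀ K⁻¹ (P M)` only sees that block.
-/

open Matrix

namespace Matrix

variable {l m n α : Type*}

lemma vecMul_injective_of_mul_eq_one [Fintype m] [Fintype n] [Semiring α] [DecidableEq m]
    {A : Matrix m n α} {B : Matrix n m α} (h : A * B = 1) : Function.Injective A.vecMul :=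
  Function.LeftInverse.injective (g := (· ᵥ* B)) fun v => by
    simp only [vecMul_vecMul, h, vecMul_one]

lemma fromRows_mul_mul_transpose_fromRows [Fintype n] [Semiring α]
    (A₁ : Matrix l n α) (A₂ : Matrix m n α) (C : Matrix n n α) :
    fromRows A₁ A₂ * C * (fromRows A₁ A₂)ᵀ =
      fromBlocks (A₁ * C * A₁ᵀ) (A₁ * C * A₂ᵀ) (A₂ * C * A₁ᵀ) (A₂ * C * A₂ᵀ) := by
  rw [fromRows_mul, transpose_fromRows, fromRows_mul_fromCols]

lemma inv_mul_mul_of_mul_eq_one [Fintype m] [Fintype n] [DecidableEq m] [DecidableEq n]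
    [CommRing α]
    {P : Matrix m n α} {Q : Matrix n m α} (hPQ : P * Q = 1) (hQP : Q * P = 1)
    (C : Matrix n n α) (hC : IsUnit C) : (P * C * Q)⁻¹ = P * C⁻¹ * Q := by
  refine inv_eq_right_inv ?_
  calc P * C * Q * (P * C⁻¹ * Q) = P * (C * (Q * P) * C⁻¹) * Q := by simp only [Matrix.mul_assoc]
    _ = 1 := by
      rw [hQP, Matrix.mul_one, mul_nonsing_inv _ ((isUnit_iff_isUnit_det C).mp hC),
        Matrix.mul_one, hPQ]

lemma transpose_fromRows_zero_mul_mul [Fintype l] [Fintype m] [Semiring α]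
    (X : Matrix m n α) (N : Matrix (l ⊕ m) (l ⊕ m) α) :
    (fromRows (0 : Matrix l n α) X)ᵀ * N * fromRows (0 : Matrix l n α) X =
      Xᵀ * N.toBlocks₂₂ * X := by
  rw [← fromBlocks_toBlocks N, transpose_fromRows, fromCols_mul_fromBlocks, fromCols_mul_fromRows]
  simp

lemma toBlocks₂₂_inv_fromBlocks [Fintype m] [Fintype n] [DecidableEq m] [DecidableEq n]
    [CommRing α]
    {A : Matrix m m α} (B : Matrix m n α) (C : Matrix n m α) (D : Matrix n n α)
    (hA : IsUnit A) (hS : IsUnit (D - C * A⁻¹ * B)) :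
    (fromBlocks A B C D)⁻¹.toBlocks₂₂ = (D - C * A⁻¹ * B)⁻¹ := by
  have := hA.invertible
  rw [← invOf_eq_nonsing_inv A] at hS ⊢
  have := hS.invertible
  have := fromBlocks₁₁Invertible A B C D
  rw [← invOf_eq_nonsing_inv, invOf_fromBlocks₁₁_eq, toBlocks_fromBlocks₂₂, invOf_eq_nonsing_inv]

namespace PosDef

variable {R : Type*} [CommRing R] [PartialOrder R] [StarRing R]

theorem schur_complement₁₁ [Fintype m] [Fintype n] [DecidableEq m] {A : Matrix m m R}
    {B : Matrix m n R} {D : Matrix n n R} (hA : A.PosDef) [Invertible A]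
    (h : (fromBlocks A B Bᴴ D).PosDef) : (D - Bᴴ * A⁻¹ * B).PosDef := by
  refine posDef_iff_dotProduct_mulVec.mpr
    ⟨(IsHermitian.fromBlocks₁₁ _ _ hA.1).mp h.1, fun x hx => ?_⟩
  -- on the vector `(-A⁻¹ B x, x)` the quadratic form of the block matrix is that of `D - Bᴴ A⁻¹ B`
  have hv : (-((A⁻¹ * B) *ᵥ x) ⊕ᵥ x) ≠ 0 := fun h0 => hx (funext fun i => congrFun h0 (Sum.inr i))
  have := h.dotProduct_mulVec_pos hv
  rwa [dotProduct_mulVec, schur_complement_eq₁₁ B D _ _ hA.1, neg_add_cancel, dotProduct_zero,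
    zero_add, ← dotProduct_mulVec] at this

end PosDef

end Matrix

theorem schur_complement_identity_general {n p : ℕ}
    (C : Matrix (Fin n) (Fin n) ℝ) (hC : C.PosDef)
    (M : Matrix (Fin n) (Fin p) ℝ)
    (W : Matrix (Fin (n - p)) (Fin n) ℝ) (L : Matrix (Fin p) (Fin n) ℝ)
    (hP₁ : (Matrix.fromRows W L)ᵀ * Matrix.fromRows W L = 1)
    (hP₂ : Matrix.fromRows W L * (Matrix.fromRows W L)ᵀ = 1)
    (hWM : W * M = 0) :
    letI CW := W * C * Wᵀ
    letI SW := L * C * Lᵀ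
    letI aW := W * C * Lᵀ
    (SW - aWᵀ * CW⁻¹ * aW).PosDef ∧
    Mᵀ * C⁻¹ * M = (L * M)ᵀ * (SW - aWᵀ * CW⁻¹ * aW)⁻¹ * (L * M) := by
  set P := fromRows W L
  have hCt : Cᵀ = C := by rw [← conjTranspose_eq_transpose_of_trivial, hC.isHermitian.eq]
  have hK : P * C * Pᵀ = fromBlocks (W * C * Wᵀ) (W * C * Lᵀ) (W * C * Lᵀ)ᴴ (L * C * Lᵀ) := by
    rw [fromRows_mul_mul_transpose_fromRows, conjTranspose_eq_transpose_of_trivial,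
      transpose_mul, transpose_mul, hCt, transpose_transpose]
    simp only [Matrix.mul_assoc]
  have hKpd : (P * C * Pᵀ).PosDef := by
    simpa only [conjTranspose_eq_transpose_of_trivial] using
      hC.mul_mul_conjTranspose_same (vecMul_injective_of_mul_eq_one hP₂)
  have hCW : (W * C * Wᵀ).PosDef := by
    rw [hK] at hKpd
    exact hKpd.submatrix Sum.inl_injective
  have := hCW.isUnit.invertible
  have hS := hCW.schur_complement₁₁ (hK ▸ hKpd)
  simp only [conjTranspose_eq_transpose_of_trivial] at hK hS
  refine ⟨hS, ?_⟩
  calc Mᵀ * C⁻¹ * M = (P * M)ᵀ * (P * C * Pᵀ)⁻¹ * (P * M) := by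
        rw [inv_mul_mul_of_mul_eq_one hP₂ hP₁ C hC.isUnit, transpose_mul,
          show Mᵀ * Pᵀ * (P * C⁻¹ * Pᵀ) * (P * M) = Mᵀ * (Pᵀ * P) * C⁻¹ * (Pᵀ * P) * M by
            simp only [Matrix.mul_assoc],
          hP₁, Matrix.mul_one, Matrix.mul_one]
    _ = (L * M)ᵀ * (P * C * Pᵀ)⁻¹.toBlocks₂₂ * (L * M) := by
        rw [fromRows_mul, hWM, transpose_fromRows_zero_mul_mul]
    _ = _ := by
        rw [hK, toBlocks₂₂_inv_fromBlocks _ _ _ hCW.isUnit hS.isUnit]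

/-- Schur-complement identity for the kriging MSE: with `P = [W; L]` orthogonal, `W M = 0`,
`C_W = W C Wᵀ`, `S_W = L C Lᵀ` and `a_W = W C Lᵀ`, the Schur complement
`S_W − a_Wᵀ C_W⁻¹ a_W` is symmetric positive definite and, with
`S̃_W = (S_W − a_Wᵀ C_W⁻¹ a_W)⁻¹`, one has `Mᵀ C⁻¹ M = (L M)ᵀ S̃_W (L M)`. -/
theorem schur_complement_identity {n p : ℕ}
    (C : Matrix (Fin n) (Fin n) ℝ) (hC : C.PosDef)
    (M : Matrix (Fin n) (Fin p) ℝ) (hM : Function.Injective M.mulVec)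
    (W : Matrix (Fin (n - p)) (Fin n) ℝ) (L : Matrix (Fin p) (Fin n) ℝ)
    (hP₁ : (Matrix.fromRows W L)ᵀ * Matrix.fromRows W L = 1)
    (hP₂ : Matrix.fromRows W L * (Matrix.fromRows W L)ᵀ = 1)
    (hWM : W * M = 0) :
    letI CW := W * C * Wᵀ
    letI SW := L * C * Lᵀ
    letI aW := W * C * Lᵀ
    (SW - aWᵀ * CW⁻¹ * aW).PosDef ∧
    Mᵀ * C⁻¹ * M = (L * M)ᵀ * (SW - aWᵀ * CW⁻¹ * aW)⁻¹ * (L * M) :=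
  schur_complement_identity_general C hC M W L hP₁ hP₂ hWM
end
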